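/- arXiv:1502.05277 — 2 statements merged into one kernel-verified Lean document; each statement's English description precedes it below -/
import Mathlib

section
/- Let k ≥ 1 and 1 ≤ s ≤ k, let 1 ≤ q ≤ s, and let π_1 + … + π_q = s be a partition of s into positive integers. Let Q be the graph whose vertex set is the disjoint union of sets B_1, …, B_q with |B_i| = π_i and sets H_1, …, H_q each of size k − s, in which all vertices of B_1 ∪ … ∪ B_q are pairwise adjacent, each H_i induces a complete graph, and every vertex of B_i is adjacent to every vertex of H_i for each i (with no other adjacencies). Then for every vertex v of Q, the graph Q − v obtained by deleting v has tree-depth exactly k − 1. -/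
/-- A `k`-ranking of a simple graph `G`: a labeling of the vertices with values from
`{1, …, k}` such that every path joining two distinct vertices with the same label
contains a vertex with a strictly higher label. -/
def IsRanking {V : Type*} (G : SimpleGraph V) (k : ℕ) (f : V → ℕ) : Prop :=
  (∀ v, 1 ≤ f v ∧ f v ≤ k) ∧
  ∀ ⦃u v : V⦄ (p : G.Walk u v), p.IsPath → u ≠ v → f u = f v →
    ∃ w ∈ p.support, f u < f w

/-- The tree-depth of `G`: the least `k` such that `G` admits a `k`-ranking. -/
noncomputable def treedepth {V : Type*} (G : SimpleGraph V) : ℕ :=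
  sInf {k | ∃ f, IsRanking G k f}

/-- The block index of a vertex of the graph `Q`: vertices are either in one of the
parts `B_i` of the central clique (left summand, `Sum.inl ⟨i, _⟩`) or in the outer
clique `H_i` (right summand, `Sum.inr (i, _)`). -/
def qIdx {q h : ℕ} {π : Fin q → ℕ} : ((Σ i : Fin q, Fin (π i)) ⊕ (Fin q × Fin h)) → Fin q
  | Sum.inl x => x.1
  | Sum.inr x => x.1

/-- The graph `Q`: the central clique `B_1 ∪ ⋯ ∪ B_q` (with `|B_i| = π i`) together with
disjoint cliques `H_1, …, H_q` each of size `h`, where every vertex of `B_i` is joined to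
every vertex of `H_i`. Two distinct vertices are adjacent iff they both lie in the
central clique, or they have the same block index. -/
def Qgraph (q h : ℕ) (π : Fin q → ℕ) :
    SimpleGraph ((Σ i : Fin q, Fin (π i)) ⊕ (Fin q × Fin h)) where
  Adj x y := x ≠ y ∧ ((x.isLeft ∧ y.isLeft) ∨ qIdx x = qIdx y)
  symm := ⟨by
    rintro x y ⟨hne, h | h⟩
    · exact ⟨hne.symm, Or.inl ⟨h.2, h.1⟩⟩
    · exact ⟨hne.symm, Or.inr h.symm⟩⟩
  loopless := ⟨fun x hx => hx.1 rfl⟩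

/-!
Write `h = k - s` and `S = ∑ i, π i`, so that the claim is `td(Q - v) = h + S - 1`.

Lower bound: let `j₀` be the block of a central vertex of least label. Two vertices of
`B ∪ H_{j₀}` other than `v` get distinct labels: either they are adjacent, or they are a
central vertex `x ∉ B_{j₀}` and some `y ∈ H_{j₀}`, and then the path `x – x' – y` through
the least-labelled `x' ∈ B_{j₀}` would need the label of `x'` to exceed that of `x`.

Upper bound: the remaining central vertices get distinct top labels, except one vertex
`b₀ ∈ B_i` when `v ∈ H_i`. What is left falls apart into cliques `H_j` (and
`{b₀} ∪ H_i - v`) of size at most `h`, labelled `1, …, h` each; a path between two of them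
passes through a central vertex with a top label.
-/

open SimpleGraph

theorem exists_injOn_compl_lt_card_sub_one {α : Type*} [Fintype α] (z : α) :
    ∃ r : α → ℕ, Set.InjOn r {z}ᶜ ∧ ∀ x ≠ z, r x < Fintype.card α - 1 := by
  classical
  have hcard : Fintype.card {x // x ≠ z} = Fintype.card α - 1 := by
    rw [Fintype.card_subtype_compl, Fintype.card_subtype_eq]
  let e := Fintype.equivFin {x // x ≠ z}
  refine ⟨fun x => if hx : x = z then 0 else e ⟨x, hx⟩, ?_, fun x hx => ?_⟩
  · intro x hx y hy hxy
    simp only [Set.mem_compl_iff, Set.mem_singleton_iff] at hx hy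
    simp only [hx, hy, dite_false, Fin.val_inj, e.apply_eq_iff_eq, Subtype.mk.injEq] at hxy
    exact hxy
  · simp only [hx, dite_false]
    exact hcard ▸ (e ⟨x, hx⟩).isLt

theorem SimpleGraph.Walk.exists_mem_support_of_apply_ne {V ι : Type*} {G : SimpleGraph V}
    {X : Set V} {g : V → ι} (hg : ∀ a b, G.Adj a b → a ∉ X → b ∉ X → g a = g b)
    {u w : V} (p : G.Walk u w) (huw : g u ≠ g w) : ∃ a ∈ p.support, a ∈ X := by
  obtain ⟨d, hd, hfst, hsnd⟩ := p.exists_boundary_dart {a | g a = g u} rfl huw.symm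
  by_cases hX : d.fst ∈ X
  · exact ⟨_, p.dart_fst_mem_support_of_mem_darts hd, hX⟩
  · by_contra! hnot
    have hsnd_X : d.snd ∉ X := hnot _ (p.dart_snd_mem_support_of_mem_darts hd)
    exact hsnd ((hg _ _ d.adj hX hsnd_X).symm.trans hfst)

theorem treedepth_eq {V : Type*} {G : SimpleGraph V} {k : ℕ} (hk : ∃ f, IsRanking G k f)
    (hmin : ∀ K f, IsRanking G K f → k ≤ K) : treedepth G = k :=
  IsLeast.csInf_eq ⟨hk, fun K ⟨f, hf⟩ => hmin K f hf⟩

namespace IsRanking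

variable {V : Type*} {G : SimpleGraph V} {k : ℕ} {f : V → ℕ}

theorem ne_of_adj (hf : IsRanking G k f) {u w : V} (h : G.Adj u w) : f u ≠ f w := by
  intro heq
  have hp : (Walk.cons h Walk.nil).IsPath := by simp [h.ne]
  obtain ⟨x, hx, hlt⟩ := hf.2 _ hp h.ne heq
  simp only [Walk.support_cons, Walk.support_nil, List.mem_cons, List.not_mem_nil,
    or_false] at hx
  rcases hx with rfl | rfl <;> omega

theorem lt_of_adj_of_adj (hf : IsRanking G k f) {u m w : V} (hum : G.Adj u m)
    (hmw : G.Adj m w) (huw : u ≠ w) (heq : f u = f w) : f u < f m := by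
  have hp : (Walk.cons hum (Walk.cons hmw Walk.nil)).IsPath := by
    simp [hum.ne, hmw.ne, huw]
  obtain ⟨x, hx, hlt⟩ := hf.2 _ hp huw heq
  simp only [Walk.support_cons, Walk.support_nil, List.mem_cons, List.not_mem_nil,
    or_false] at hx
  rcases hx with rfl | rfl | rfl <;> omega

theorem card_le_of_injOn (hf : IsRanking G k f) {s : Finset V} (hs : Set.InjOn f s) :
    s.card ≤ k := by
  simpa using Finset.card_le_card_of_injOn f (t := Finset.Icc 1 k)
    (fun v _ => Finset.mem_Icc.mpr (hf.1 v)) hs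

theorem of_separating {ι : Type*} (X : Set V) (g : V → ι)
    (hbound : ∀ v, 1 ≤ f v ∧ f v ≤ k) (hX : Set.InjOn f X)
    (hlt : ∀ x ∈ X, ∀ y ∉ X, f y < f x)
    (hg : ∀ a b, G.Adj a b → a ∉ X → b ∉ X → g a = g b)
    (hsep : ∀ a b, a ∉ X → b ∉ X → f a = f b → g a = g b → a = b) :
    IsRanking G k f := by
  refine ⟨hbound, fun u w p _ hne heq => ?_⟩
  by_cases hu : u ∈ X <;> by_cases hw : w ∈ X
  · exact absurd (hX hu hw heq) hne
  · exact absurd heq (hlt u hu w hw).ne'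
  · exact absurd heq (hlt w hw u hu).ne
  · obtain ⟨a, ha, haX⟩ :=
      p.exists_mem_support_of_apply_ne hg fun hg' => hne (hsep u w hu hw heq hg')
    exact ⟨a, ha, hlt a haX u hu⟩

end IsRanking

namespace Qgraph

variable {q h : ℕ} {π : Fin q → ℕ} {a b v : (Σ i : Fin q, Fin (π i)) ⊕ (Fin q × Fin h)}

theorem adj_of_isLeft (hab : a ≠ b) (ha : a.isLeft) (hb : b.isLeft) :
    (Qgraph q h π).Adj a b :=
  ⟨hab, Or.inl ⟨ha, hb⟩⟩

theorem adj_of_qIdx_eq (hab : a ≠ b) (hidx : qIdx a = qIdx b) : (Qgraph q h π).Adj a b :=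
  ⟨hab, Or.inr hidx⟩

theorem qIdx_eq_of_adj (hadj : (Qgraph q h π).Adj a b) (hab : ¬(a.isLeft ∧ b.isLeft)) :
    qIdx a = qIdx b :=
  hadj.2.resolve_left hab

theorem isRanking_induce_sumElim {K : ℕ} {c : (Σ i : Fin q, Fin (π i)) → ℕ}
    {d : Fin q × Fin h → ℕ} (hhK : h ≤ K)
    (hc : ∀ x, Sum.inl x ≠ v → 1 ≤ c x ∧ c x ≤ K)
    (hd : ∀ y, Sum.inr y ≠ v → 1 ≤ d y ∧ d y ≤ h)
    (hc_inj : ∀ x y, Sum.inl x ≠ v → Sum.inl y ≠ v → c x = c y → x = y)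
    (hd_inj : ∀ j b b', Sum.inr (j, b) ≠ v → Sum.inr (j, b') ≠ v →
      d (j, b) = d (j, b') → b = b')
    (hlow_unique : ∀ x y, Sum.inl x ≠ v → Sum.inl y ≠ v → c x ≤ h → c y ≤ h →
      x = y)
    (hlow_lt : ∀ x b, Sum.inl x ≠ v → Sum.inr (x.1, b) ≠ v → c x ≤ h →
      d (x.1, b) < c x) :
    IsRanking ((Qgraph q h π).induce {w | w ≠ v}) K fun a => Sum.elim c d a.val := by
  refine IsRanking.of_separating {a | ∃ x, a.val = Sum.inl x ∧ h < c x}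
    (fun a => qIdx a.val) ?_ ?_ ?_ ?_ ?_
  · rintro ⟨x | y, hv⟩
    · exact hc x hv
    · have := hd y hv
      exact ⟨this.1, this.2.trans hhK⟩
  · rintro ⟨_, hx⟩ ⟨x, rfl, -⟩ ⟨_, hy⟩ ⟨y, rfl, -⟩ hxy
    simp [hc_inj x y hx hy hxy]
  · rintro ⟨_, -⟩ ⟨x, rfl, hx⟩ ⟨y | y, hv⟩ hyX
    · have : ¬h < c y := fun hlt => hyX ⟨y, rfl, hlt⟩
      show c y < c x
      omega
    · exact (hd y hv).2.trans_lt hx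
  · rintro ⟨a, ha⟩ ⟨b, hb⟩ hab haX hbX
    refine qIdx_eq_of_adj hab ?_
    rintro ⟨haL, hbL⟩
    obtain ⟨x, rfl⟩ := Sum.isLeft_iff.mp haL
    obtain ⟨y, rfl⟩ := Sum.isLeft_iff.mp hbL
    have hx : ¬h < c x := fun hlt => haX ⟨x, rfl, hlt⟩
    have hy : ¬h < c y := fun hlt => hbX ⟨y, rfl, hlt⟩
    exact hab.ne (by simp [hlow_unique x y ha hb (by omega) (by omega)])
  · rintro ⟨x | ⟨j, b⟩, hx⟩ ⟨y | ⟨j', b'⟩, hy⟩ haX hbX hab hidx <;>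
      simp only [Sum.elim_inl, Sum.elim_inr, qIdx] at hab hidx
    · simp [hc_inj x y hx hy hab]
    · subst hidx
      have := hlow_lt x b' hx hy (not_lt.mp fun hlt => haX ⟨x, rfl, hlt⟩)
      omega
    · subst hidx
      have := hlow_lt y b hy hx (not_lt.mp fun hlt => hbX ⟨y, rfl, hlt⟩)
      omega
    · subst hidx
      simp [hd_inj j b b' hx hy hab]

theorem exists_isRanking_induce_ne_inl (z : Σ i : Fin q, Fin (π i)) :
    ∃ f, IsRanking ((Qgraph q h π).induce {w | w ≠ Sum.inl z}) (h + ∑ i, π i - 1) f := by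
  obtain ⟨r, hr_inj, hr_lt⟩ := exists_injOn_compl_lt_card_sub_one z
  have hcard : Fintype.card (Σ i : Fin q, Fin (π i)) = ∑ i, π i := by simp
  have hpos : 0 < ∑ i, π i := hcard ▸ Fintype.card_pos_iff.mpr ⟨z⟩
  rw [hcard] at hr_lt
  refine ⟨_, isRanking_induce_sumElim (c := fun x => h + 1 + r x) (d := fun y => y.2 + 1)
    (by omega) ?_ ?_ ?_ ?_ ?_ ?_⟩
  · intro x hx
    have := hr_lt x (ne_of_apply_ne Sum.inl hx)
    omega
  · intro y _
    have := y.2.isLt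
    omega
  · intro x y hx hy hxy
    exact hr_inj (ne_of_apply_ne Sum.inl hx) (ne_of_apply_ne Sum.inl hy) (by omega)
  · intro j b b' _ _ hbb
    exact Fin.ext (by simpa using hbb)
  · intro x y _ _ hx
    omega
  · intro x b _ _ hx
    omega

theorem exists_isRanking_induce_ne_inr (hπ : ∀ i, 1 ≤ π i) (i : Fin q) (c : Fin h) :
    ∃ f, IsRanking ((Qgraph q h π).induce {w | w ≠ Sum.inr (i, c)})
      (h + ∑ i, π i - 1) f := by
  classical
  let b₀ : Σ i : Fin q, Fin (π i) := ⟨i, ⟨0, hπ i⟩⟩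
  obtain ⟨r, hr_inj, hr_lt⟩ := exists_injOn_compl_lt_card_sub_one b₀
  obtain ⟨r', hr'_inj, hr'_lt⟩ := exists_injOn_compl_lt_card_sub_one c
  have hcard : Fintype.card (Σ i : Fin q, Fin (π i)) = ∑ i, π i := by simp
  have hpos : 0 < ∑ i, π i := hcard ▸ Fintype.card_pos_iff.mpr ⟨b₀⟩
  rw [hcard] at hr_lt
  rw [Fintype.card_fin] at hr'_lt
  have hne_c : ∀ {b : Fin h},
      (Sum.inr (i, b) : (Σ i : Fin q, Fin (π i)) ⊕ _) ≠ Sum.inr (i, c) → b ≠ c :=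
    fun hb hbc => hb (hbc ▸ rfl)
  have hlow : ∀ x, (if x = b₀ then h else h + 1 + r x) ≤ h → x = b₀ := by
    intro x hx
    by_contra hxb
    rw [if_neg hxb] at hx
    omega
  refine ⟨_, isRanking_induce_sumElim (c := fun x => if x = b₀ then h else h + 1 + r x)
    (d := fun y => if y.1 = i then r' y.2 + 1 else y.2 + 1) (by omega) ?_ ?_ ?_ ?_ ?_ ?_⟩
  · intro x _
    have := c.pos
    split_ifs with hxb
    · omega
    · have := hr_lt x hxb
      omega
  · rintro ⟨j, b⟩ hv
    have := b.isLt
    dsimp only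
    split_ifs with hj
    · have := hr'_lt b (hne_c (hj ▸ hv))
      omega
    · omega
  · intro x y _ _ hxy
    split_ifs at hxy with hx hy hy
    · rw [hx, hy]
    · omega
    · omega
    · exact hr_inj hx hy (by omega)
  · intro j b b' hb hb' hbb
    dsimp only at hbb
    split_ifs at hbb with hj
    · subst hj
      exact hr'_inj (hne_c hb) (hne_c hb') (by omega)
    · exact Fin.ext (by omega)
  · intro x y _ _ hx hy
    rw [hlow x hx, hlow y hy]
  · intro x b _ hb hx
    obtain rfl := hlow x hx
    have := hr'_lt b (hne_c hb)
    simp only [b₀, if_true]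
    omega

theorem injOn_isLeft_or_qIdx_eq {K : ℕ} {f : {w | w ≠ v} → ℕ}
    (hf : IsRanking ((Qgraph q h π).induce {w | w ≠ v}) K f) {j₀ : Fin q}
    (hj₀ : ∀ x : {w | w ≠ v}, x.val.isLeft →
      ∃ x' : {w | w ≠ v}, x'.val.isLeft ∧ qIdx x'.val = j₀ ∧ f x' ≤ f x) :
    Set.InjOn f {a | a.val.isLeft ∨ qIdx a.val = j₀} := by
  have adj_ne : ∀ a b : {w | w ≠ v}, (Qgraph q h π).Adj a.val b.val → f a ≠ f b :=
    fun a b hab => hf.ne_of_adj hab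
  have hcross : ∀ a b : {w | w ≠ v}, a.val.isLeft → ¬b.val.isLeft → qIdx b.val = j₀ →
      f a ≠ f b := by
    intro a b haL hbL hb
    have hab : a.val ≠ b.val := fun h => hbL (h ▸ haL)
    by_cases ha : qIdx a.val = j₀
    · exact adj_ne a b (adj_of_qIdx_eq hab (ha.trans hb.symm))
    intro hfab
    obtain ⟨x', hx'L, hx', hx'le⟩ := hj₀ a haL
    have hax' : (Qgraph q h π).Adj a.val x'.val :=
      adj_of_isLeft (fun h => ha (h ▸ hx')) haL hx'L
    have hx'b : (Qgraph q h π).Adj x'.val b.val :=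
      adj_of_qIdx_eq (fun h => hbL (h ▸ hx'L)) (hx'.trans hb.symm)
    have := hf.lt_of_adj_of_adj hax' hx'b (fun h => hab (congrArg Subtype.val h)) hfab
    omega
  intro a ha b hb hfab
  by_contra hne
  have hab : a.val ≠ b.val := fun h => hne (Subtype.ext h)
  by_cases haL : a.val.isLeft <;> by_cases hbL : b.val.isLeft
  · exact adj_ne a b (adj_of_isLeft hab haL hbL) hfab
  · exact hcross a b haL hbL (hb.resolve_left hbL) hfab
  · exact hcross b a hbL haL (ha.resolve_left haL) hfab.symm
  · exact adj_ne a b (adj_of_qIdx_eq hab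
      ((ha.resolve_left haL).trans (hb.resolve_left hbL).symm)) hfab

theorem le_of_isRanking_induce_ne {K : ℕ} {f : {w | w ≠ v} → ℕ}
    (hf : IsRanking ((Qgraph q h π).induce {w | w ≠ v}) K f) :
    h + ∑ i, π i - 1 ≤ K := by
  classical
  obtain ⟨j₀, hj₀⟩ : ∃ j₀ : Fin q, ∀ x : {w | w ≠ v}, x.val.isLeft →
      ∃ x' : {w | w ≠ v}, x'.val.isLeft ∧ qIdx x'.val = j₀ ∧ f x' ≤ f x := by
    by_cases hL : ∃ x : {w | w ≠ v}, x.val.isLeft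
    · obtain ⟨m, hm, hmin⟩ := Finset.exists_min_image
        (Finset.univ.filter fun x : {w | w ≠ v} => x.val.isLeft) f
        (by simpa [Finset.Nonempty] using hL)
      simp only [Finset.mem_filter, Finset.mem_univ, true_and] at hm hmin
      exact ⟨qIdx m.val, fun x hx => ⟨m, hm, rfl, hmin x hx⟩⟩
    · exact ⟨qIdx v, fun x hx => absurd ⟨x, hx⟩ hL⟩
  let T : Finset ((Σ i : Fin q, Fin (π i)) ⊕ (Fin q × Fin h)) :=
    Finset.univ.map ⟨Sum.map id (Prod.mk j₀),
      Sum.map_injective.mpr ⟨Function.injective_id, Prod.mk_right_injective j₀⟩⟩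
  have hT : ∀ w ∈ T, w.isLeft ∨ qIdx w = j₀ := by
    simp only [T, Finset.mem_map, Finset.mem_univ, true_and, Function.Embedding.coeFn_mk]
    rintro _ ⟨x | b, rfl⟩
    · exact Or.inl rfl
    · exact Or.inr rfl
  have hTcard : T.card = ∑ i, π i + h := by simp [T]
  have hle := hf.card_le_of_injOn (s := T.subtype (· ≠ v))
    ((injOn_isLeft_or_qIdx_eq hf hj₀).mono fun a ha => hT _ (by simpa using ha))
  rw [Finset.card_subtype, Finset.filter_ne'] at hle
  have := T.pred_card_le_card_erase (a := v)
  omega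

end Qgraph

theorem treedepth_Qgraph_deleteVertex_general (k s q : ℕ) (hsk : s ≤ k) (π : Fin q → ℕ)
    (hπ : ∀ i, 1 ≤ π i) (hsum : ∑ i, π i = s)
    (v : (Σ i : Fin q, Fin (π i)) ⊕ (Fin q × Fin (k - s))) :
    treedepth ((Qgraph q (k - s) π).induce {w | w ≠ v}) = k - 1 := by
  rw [show k - 1 = k - s + ∑ i, π i - 1 by omega]
  refine treedepth_eq ?_ fun _ _ hf => Qgraph.le_of_isRanking_induce_ne hf
  rcases v with z | ⟨i, c⟩
  · exact Qgraph.exists_isRanking_induce_ne_inl z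
  · exact Qgraph.exists_isRanking_induce_ne_inr hπ i c

/-- For `1 ≤ s ≤ k`, `1 ≤ q ≤ s`, and a partition `π_1 + ⋯ + π_q = s` of `s` into
positive integers, deleting any vertex of the graph `Q` (built from cliques `B_i` with
`|B_i| = π i` and `H_i` with `|H_i| = k − s`) yields a graph of tree-depth exactly
`k − 1`. -/
theorem treedepth_Qgraph_deleteVertex (k s q : ℕ) (hk : 1 ≤ k) (hs1 : 1 ≤ s)
    (hsk : s ≤ k) (hq1 : 1 ≤ q) (hqs : q ≤ s) (π : Fin q → ℕ) (hπ : ∀ i, 1 ≤ π i)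
    (hsum : ∑ i, π i = s)
    (v : (Σ i : Fin q, Fin (π i)) ⊕ (Fin q × Fin (k - s))) :
    treedepth ((Qgraph q (k - s) π).induce {w | w ≠ v}) = k - 1 :=
  treedepth_Qgraph_deleteVertex_general k s q hsk π hπ hsum v
end

section
/- Let k ≥ 3, let 0 ≤ t ≤ 2^{k−2} − 2 with t ≥ 1, and let x be a vertex of R_{k,t} of degree 2 lying on the cycle of R_{k,t} (that is, x = v_j with t + 1 < j < 2^{k−2} + 1 in the labeling below). Then the graph R_{k,t} − x contains a subgraph whose tree-depth is at least k − 1; in particular td(R_{k,t} − x) ≥ k − 1. -/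
/-- The graph `R_{k,t}`: a path `v_1, …, v_{2^{k-2}+1+t}` (vertex `v_i` is index `i - 1`
in `Fin (2^(k-2)+1+t)`) together with an added edge between `v_{t+1}` (index `t`) and
`v_{2^{k-2}+1}` (index `2^(k-2)`). -/
def Rgraph (k t : ℕ) : SimpleGraph (Fin (2 ^ (k - 2) + 1 + t)) :=
  SimpleGraph.fromRel (fun i j =>
    i.val + 1 = j.val ∨ (i.val = t ∧ j.val = 2 ^ (k - 2)))


open SimpleGraph Set

variable {V W : Type*}

def RanksOn (G : SimpleGraph V) (S : Set V) (f : V → ℕ) : Prop :=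
  ∀ ⦃u v : V⦄ (p : G.Walk u v), p.IsPath → (∀ w ∈ p.support, w ∈ S) → u ≠ v → f u = f v →
    ∃ w ∈ p.support, f u < f w

theorem IsRanking.ranksOn_univ {G : SimpleGraph V} {k : ℕ} {f : V → ℕ} (hf : IsRanking G k f) :
    RanksOn G univ f :=
  fun _ _ p hp _ => hf.2 p hp

theorem SimpleGraph.Walk.exists_map_of_adj {G : SimpleGraph V} {H : SimpleGraph W} {S : Set W}
    {ψ : W → V} (hadj : ∀ u ∈ S, ∀ v ∈ S, H.Adj u v → G.Adj (ψ u) (ψ v)) :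
    ∀ {u v : W} (p : H.Walk u v), (∀ w ∈ p.support, w ∈ S) →
      ∃ q : G.Walk (ψ u) (ψ v), q.support = p.support.map ψ
  | _, _, .nil, _ => ⟨.nil, rfl⟩
  | _, _, .cons h p, hS => by
    obtain ⟨q, hq⟩ := p.exists_map_of_adj hadj fun w hw => hS w (by simp [hw])
    exact ⟨.cons (hadj _ (hS _ (by simp)) _ (hS _ (by simp)) h) q, by simp [hq]⟩

namespace RanksOn

variable {G : SimpleGraph V} {S T : Set V} {f : V → ℕ}

theorem mono (hf : RanksOn G S f) (hTS : T ⊆ S) : RanksOn G T f :=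
  fun _ _ p hp hT => hf p hp fun w hw => hTS (hT w hw)

theorem comp {H : SimpleGraph W} {S' : Set W} {ψ : W → V} (hf : RanksOn G S f)
    (hmaps : MapsTo ψ S' S) (hinj : InjOn ψ S')
    (hadj : ∀ u ∈ S', ∀ v ∈ S', H.Adj u v → G.Adj (ψ u) (ψ v)) : RanksOn H S' (f ∘ ψ) := by
  intro u v p hp hS huv h
  obtain ⟨q, hq⟩ := p.exists_map_of_adj hadj hS
  have hq_path : q.IsPath := by
    rw [Walk.isPath_def, hq]
    exact hp.support_nodup.map_on fun a ha b hb => hinj (hS a ha) (hS b hb)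
  have hq_sub : ∀ w ∈ q.support, w ∈ S := by
    rw [hq]
    rintro _ hw
    obtain ⟨y, hy, rfl⟩ := List.mem_map.mp hw
    exact hmaps (hS y hy)
  obtain ⟨w, hw, hlt⟩ := hf q hq_path hq_sub
    (hinj.ne (hS _ p.start_mem_support) (hS _ p.end_mem_support) huv) h
  rw [hq] at hw
  obtain ⟨y, hy, rfl⟩ := List.mem_map.mp hw
  exact ⟨y, hy, hlt⟩

theorem exists_lt_of_walk (hf : RanksOn G S f) {u v : V} (p : G.Walk u v)
    (hp : ∀ w ∈ p.support, w ∈ S) (huv : u ≠ v) (h : f u = f v) : ∃ w ∈ S, f u < f w := by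
  classical
  have hsub := p.support_bypass_subset_support
  obtain ⟨w, hw, hlt⟩ := hf p.bypass p.bypass_isPath (fun w hw => hp w (hsub hw)) huv h
  exact ⟨w, hp w (hsub hw), hlt⟩

theorem lt_of_isMaxOn (hf : RanksOn G S f) (hS : (G.induce S).Preconnected) {v₀ w : V}
    (hv₀ : v₀ ∈ S) (hmax : IsMaxOn f S v₀) (hw : w ∈ S) (hne : w ≠ v₀) : f w < f v₀ := by
  refine lt_of_le_of_ne (hmax hw) fun heq => ?_
  obtain ⟨q⟩ := hS ⟨w, hw⟩ ⟨v₀, hv₀⟩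
  have hq : ∀ u ∈ (q.map (Embedding.induce S).toHom).support, u ∈ S := by
    intro u hu
    rw [Walk.support_map, List.mem_map] at hu
    obtain ⟨y, -, rfl⟩ := hu
    exact y.2
  obtain ⟨u, hu, hlt⟩ := hf.exists_lt_of_walk _ hq hne heq
  exact (hmax hu).not_gt (heq ▸ hlt)

end RanksOn

section Ranking

variable {h : ℤ → ℕ} {a b : ℤ}

theorem Int.lt_of_ranking_of_isMaxOn
    (hrank : ∀ i ∈ Icc a b, ∀ j ∈ Icc a b, i < j → h i = h j → ∃ l ∈ Icc i j, h i < h l)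
    {c d : ℤ} (hc : c ∈ Icc a b) (hmax : IsMaxOn h (Icc a b) c) (hd : d ∈ Icc a b)
    (hdc : d ≠ c) : h d < h c := by
  refine lt_of_le_of_ne (hmax hd) fun heq => ?_
  obtain ⟨l, hl, hlt⟩ : ∃ l ∈ Icc a b, h d < h l := by
    rcases lt_or_gt_of_ne hdc with hlt | hlt
    · obtain ⟨l, hl, hlt⟩ := hrank d hd c hc hlt heq
      exact ⟨l, Icc_subset_Icc hd.1 hc.2 hl, hlt⟩
    · obtain ⟨l, hl, hlt⟩ := hrank c hc d hd hlt heq.symm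
      exact ⟨l, Icc_subset_Icc hc.1 hd.2 hl, heq ▸ hlt⟩
  exact (hmax hl).not_gt (heq ▸ hlt)

theorem Int.sub_lt_two_pow_of_ranking (B : ℕ) (hB : ∀ i ∈ Icc a b, 1 ≤ h i ∧ h i ≤ B)
    (hrank : ∀ i ∈ Icc a b, ∀ j ∈ Icc a b, i < j → h i = h j → ∃ l ∈ Icc i j, h i < h l) :
    b + 1 - a < 2 ^ B := by
  induction B generalizing a b with
  | zero =>
    by_contra hab
    have := hB a ⟨le_rfl, by omega⟩
    omega
  | succ B ih =>
    have hrank_sub : ∀ {a' b'}, a ≤ a' → b' ≤ b → ∀ i ∈ Icc a' b', ∀ j ∈ Icc a' b', i < j →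
        h i = h j → ∃ l ∈ Icc i j, h i < h l := fun ha hb i hi j hj =>
      hrank i (Icc_subset_Icc ha hb hi) j (Icc_subset_Icc ha hb hj)
    have hpow : (2 : ℤ) ^ (B + 1) = 2 ^ B + 2 ^ B := by ring
    by_cases htop : ∃ c ∈ Icc a b, h c = B + 1
    · obtain ⟨c, hc, hcB⟩ := htop
      have hrest : ∀ d ∈ Icc a b, d ≠ c → 1 ≤ h d ∧ h d ≤ B := fun d hd hdc => by
        have := Int.lt_of_ranking_of_isMaxOn hrank hc
          (fun i hi => hcB ▸ (hB i hi).2) hd hdc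
        exact ⟨(hB d hd).1, by omega⟩
      obtain ⟨hac, hcb⟩ := hc
      have hleft := ih (a := a) (b := c - 1)
        (fun i ⟨hai, hic⟩ => hrest i ⟨hai, by omega⟩ (by omega)) (hrank_sub le_rfl (by omega))
      have hright := ih (a := c + 1) (b := b)
        (fun i ⟨hci, hib⟩ => hrest i ⟨by omega, hib⟩ (by omega)) (hrank_sub (by omega) le_rfl)
      omega
    · push Not at htop
      have := ih (fun i hi => ⟨(hB i hi).1, by have := (hB i hi).2; have := htop i hi; omega⟩)
        hrank
      have : (0 : ℤ) < 2 ^ B := by positivity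
      omega

end Ranking

def IsLine (G : SimpleGraph V) (ℓ : ℤ → V) : Prop :=
  Function.Injective ℓ ∧ ∀ i, G.Adj (ℓ i) (ℓ (i + 1))

def bend (ℓ₁ ℓ₂ : ℤ → V) (i : ℤ) : V :=
  if i ≤ 0 then ℓ₁ i else ℓ₂ (i - 1)

namespace IsLine

variable {G : SimpleGraph V} {ℓ : ℤ → V}

theorem bend {ℓ₁ ℓ₂ : ℤ → V} (h₁ : IsLine G ℓ₁) (h₂ : IsLine G ℓ₂) (h₁₂ : G.Adj (ℓ₁ 0) (ℓ₂ 0))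
    (hdisj : ∀ i j, ℓ₁ i ≠ ℓ₂ j) : IsLine G (_root_.bend ℓ₁ ℓ₂) := by
  refine ⟨fun i j hij => ?_, fun i => ?_⟩
  · unfold _root_.bend at hij
    split_ifs at hij
    · exact h₁.1 hij
    · exact absurd hij (hdisj _ _)
    · exact absurd hij.symm (hdisj _ _)
    · have := h₂.1 hij; omega
  · unfold _root_.bend
    rcases lt_trichotomy i 0 with hi | rfl | hi
    · simpa [show i ≤ 0 by omega, show i + 1 ≤ 0 by omega] using h₁.2 i
    · simpa using h₁₂
    · simpa [show ¬ i ≤ 0 by omega, show ¬ i + 1 ≤ 0 by omega] using h₂.2 (i - 1)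

theorem exists_isPath (hℓ : IsLine G ℓ) {a b : ℤ} (hab : a ≤ b) :
    ∃ p : G.Walk (ℓ a) (ℓ b), p.IsPath ∧ ∀ w ∈ p.support, ∃ i ∈ Icc a b, ℓ i = w := by
  obtain ⟨n, rfl⟩ : ∃ n : ℕ, b = a + n := ⟨(b - a).toNat, by omega⟩
  clear hab
  induction n generalizing a with
  | zero => exact ⟨.copy .nil rfl (by simp), by simp, by simp⟩
  | succ n ih =>
    obtain ⟨p, hp, hsupp⟩ := ih (a := a + 1)
    have hend : a + 1 + n = a + (n + 1 : ℕ) := by push_cast; ring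
    refine ⟨(Walk.cons (hℓ.2 a) p).copy rfl (by rw [hend]), ?_, ?_⟩
    · rw [Walk.isPath_copy]
      refine hp.cons fun ha => ?_
      obtain ⟨i, hi, hia⟩ := hsupp _ ha
      have := hℓ.1 hia
      simp only [mem_Icc] at hi
      omega
    · intro w hw
      rw [Walk.support_copy, Walk.support_cons, List.mem_cons] at hw
      rcases hw with rfl | hw
      · exact ⟨a, by simp only [mem_Icc]; omega, rfl⟩
      · obtain ⟨i, hi, rfl⟩ := hsupp w hw
        simp only [mem_Icc] at hi
        exact ⟨i, by simp only [mem_Icc]; push_cast; omega, rfl⟩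

theorem reachable_induce {S : Set V} (hℓ : IsLine G ℓ) {a b : ℤ} (hab : a ≤ b)
    (hS : MapsTo ℓ (Icc a b) S) {u v : V} (hu : u ∈ S) (hv : v ∈ S) (hau : ℓ a = u)
    (hbv : ℓ b = v) : (G.induce S).Reachable ⟨u, hu⟩ ⟨v, hv⟩ := by
  subst hau hbv
  obtain ⟨p, -, hp⟩ := hℓ.exists_isPath hab
  exact ⟨p.induce S fun w hw => by obtain ⟨i, hi, rfl⟩ := hp w hw; exact hS hi⟩

end IsLine

theorem RanksOn.sub_lt_two_pow_of_isLine {G : SimpleGraph V} {S : Set V} {f : V → ℕ}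
    {ℓ : ℤ → V} (hf : RanksOn G S f) (hℓ : IsLine G ℓ) {a b : ℤ} {B : ℕ}
    (h : ∀ i ∈ Icc a b, ℓ i ∈ S ∧ 1 ≤ f (ℓ i) ∧ f (ℓ i) ≤ B) : b + 1 - a < 2 ^ B := by
  refine Int.sub_lt_two_pow_of_ranking (h := f ∘ ℓ) B (fun i hi => (h i hi).2) ?_
  intro i hi j hj hij hfij
  obtain ⟨p, hp, hsupp⟩ := hℓ.exists_isPath hij.le
  have hsub : Icc i j ⊆ Icc a b := Icc_subset_Icc hi.1 hj.2
  obtain ⟨w, hw, hlt⟩ := hf p hp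
    (fun w hw => by obtain ⟨l, hl, rfl⟩ := hsupp w hw; exact (h l (hsub hl)).1)
    (hℓ.1.ne hij.ne) hfij
  obtain ⟨l, hl, rfl⟩ := hsupp w hw
  exact ⟨l, hl, hlt⟩

def hGraph : SimpleGraph (ℤ ⊕ ℤ) := SimpleGraph.fromRel fun p q =>
  (∃ i, p = .inl i ∧ q = .inl (i + 1)) ∨ (∃ j, p = .inr j ∧ q = .inr (j + 1)) ∨
    (p = .inl 0 ∧ q = .inr 0)

def hTree (t e g : ℕ) : Set (ℤ ⊕ ℤ) :=
  Sum.inl '' Icc (-t : ℤ) e ∪ Sum.inr '' Icc (-g : ℤ) t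

def hFlip : ℤ ⊕ ℤ → ℤ ⊕ ℤ :=
  Sum.elim (fun i => .inr (-i)) (fun j => .inl (-j))

section hTree

variable {t e g : ℕ}

@[simp]
theorem inl_mem_hTree {i : ℤ} : Sum.inl i ∈ hTree t e g ↔ -(t : ℤ) ≤ i ∧ i ≤ e := by
  simp [hTree]

@[simp]
theorem inr_mem_hTree {j : ℤ} : Sum.inr j ∈ hTree t e g ↔ -(g : ℤ) ≤ j ∧ j ≤ t := by
  simp [hTree]

theorem hTree_finite : (hTree t e g).Finite :=
  ((finite_Icc _ _).image _).union ((finite_Icc _ _).image _)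

theorem hTree_mono {e' g' : ℕ} (he : e' ≤ e) (hg : g' ≤ g) : hTree t e' g' ⊆ hTree t e g := by
  rintro (i | j) h <;> simp only [inl_mem_hTree, inr_mem_hTree] at h ⊢ <;> omega

theorem isLine_inl : IsLine hGraph Sum.inl :=
  ⟨Sum.inl_injective, fun i => by simp [hGraph]⟩

theorem isLine_inr : IsLine hGraph Sum.inr :=
  ⟨Sum.inr_injective, fun j => by simp [hGraph]⟩

theorem hGraph_adj_inl_zero_inr_zero : hGraph.Adj (.inl 0) (.inr 0) := by
  simp [hGraph]

theorem isLine_bend_inl_inr : IsLine hGraph (bend .inl .inr) :=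
  isLine_inl.bend isLine_inr hGraph_adj_inl_zero_inr_zero fun _ _ => Sum.inl_ne_inr

theorem isLine_bend_inr_inl : IsLine hGraph (bend .inr .inl) :=
  isLine_inr.bend isLine_inl hGraph_adj_inl_zero_inr_zero.symm fun _ _ => Sum.inr_ne_inl

theorem hTree_preconnected : (hGraph.induce (hTree t e g)).Preconnected := by
  have h0 : Sum.inl 0 ∈ hTree t e g := by simp
  suffices h : ∀ u (hu : u ∈ hTree t e g), (hGraph.induce _).Reachable ⟨_, h0⟩ ⟨u, hu⟩ from
    fun u v => (h u u.2).symm.trans (h v v.2)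
  rintro (i | j) hu
  · rcases le_total 0 i with hi | hi
    · exact isLine_inl.reachable_induce hi (fun n hn => by simp at hu hn ⊢; omega) h0 hu rfl rfl
    · exact (isLine_inl.reachable_induce hi (fun n hn => by simp at hu hn ⊢; omega)
        hu h0 rfl rfl).symm
  · rcases le_total 0 j with hj | hj
    · exact isLine_bend_inl_inr.reachable_induce (a := 0) (b := j + 1) (by omega)
        (fun n hn => by unfold bend; split_ifs <;> simp at hu hn ⊢ <;> omega) h0 hu
        (by simp [bend]) (by simp [bend]; omega)
    · exact (isLine_bend_inr_inl.reachable_induce (a := j) (b := 1) (by omega)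
        (fun n hn => by unfold bend; split_ifs <;> simp at hu hn ⊢ <;> omega) hu h0
        (by simp [bend]; omega) (by simp [bend])).symm

theorem hFlip_injective : Function.Injective hFlip := by
  rintro (i | i) (j | j) h <;> simp_all [hFlip]

theorem hGraph_adj_hFlip {u v : ℤ ⊕ ℤ} (h : hGraph.Adj u v) :
    hGraph.Adj (hFlip u) (hFlip v) := by
  simp only [hGraph, fromRel_adj] at h ⊢
  refine ⟨hFlip_injective.ne h.1, ?_⟩
  rcases h.2 with (⟨i, rfl, rfl⟩ | ⟨j, rfl, rfl⟩ | ⟨rfl, rfl⟩) |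
    (⟨i, rfl, rfl⟩ | ⟨j, rfl, rfl⟩ | ⟨rfl, rfl⟩) <;> simp [hFlip]

theorem mapsTo_hFlip_hTree : MapsTo hFlip (hTree t g e) (hTree t e g) := by
  rintro (i | j) h <;>
    simp only [hFlip, Sum.elim_inl, Sum.elim_inr, inl_mem_hTree, inr_mem_hTree] at h ⊢ <;> omega

end hTree

section core

variable {t e g K : ℕ} {f : ℤ ⊕ ℤ → ℕ}

theorem false_of_top_label_inl (ih : ∀ e' g', e' + g' + t + 2 = 2 ^ K → ∀ f : ℤ ⊕ ℤ → ℕ,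
      RanksOn hGraph (hTree t e' g') f → (∀ v ∈ hTree t e' g', 1 ≤ f v) →
      ∃ v ∈ hTree t e' g', K < f v)
    (hsum : e + g + t + 2 = 2 ^ (K + 1)) (ht : t + 2 ≤ 2 ^ K)
    (hf : RanksOn hGraph (hTree t e g) f) (hpos : ∀ v ∈ hTree t e g, 1 ≤ f v) {i : ℤ}
    (hi : Sum.inl i ∈ hTree t e g) (hle : ∀ w ∈ hTree t e g, w ≠ .inl i → f w ≤ K) : False := by
  have hshort : ∀ {ℓ}, IsLine hGraph ℓ → ∀ a b : ℤ,
      (∀ n ∈ Icc a b, ℓ n ∈ hTree t e g ∧ ℓ n ≠ .inl i) → b + 1 - a < 2 ^ K :=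
    fun hℓ _ _ h => hf.sub_lt_two_pow_of_isLine hℓ fun n hn =>
      ⟨(h n hn).1, hpos _ (h n hn).1, hle _ (h n hn).1 (h n hn).2⟩
  have hsumZ : (e : ℤ) + g + t + 2 = 2 ^ (K + 1) := by exact_mod_cast hsum
  have htZ : (t : ℤ) + 2 ≤ 2 ^ K := by exact_mod_cast ht
  rw [inl_mem_hTree] at hi
  rcases lt_trichotomy i 0 with hi_neg | rfl | hi_pos
  · -- the inner path `inr (-g), …, inr 0, inl 0, …, inl e` avoids `inl i`
    have := hshort isLine_bend_inr_inl (-g) (e + 1)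
      (fun n hn => by unfold bend; split_ifs <;> simp at hn ⊢ <;> omega)
    omega
  · by_cases hlong : 2 ^ K ≤ (e : ℤ)
    · have := hshort isLine_inl 1 e (fun n hn => by simp at hn ⊢; omega)
      omega
    · have := hshort isLine_inr (-g) t (fun n hn => by simp at hn ⊢; omega)
      omega
  · by_cases hlong : 2 ^ K ≤ e - i
    · have := hshort isLine_inl (i + 1) e (fun n hn => by simp at hn ⊢; omega)
      omega
    · -- cut the inner arms short of `inl i`, keeping `e' + g' + t + 2 = 2 ^ K`
      lift i to ℕ using hi_pos.le
      have hei : e < i + 2 ^ K := by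
        have := not_le.mp hlong
        exact_mod_cast (by omega : (e : ℤ) < i + 2 ^ K)
      obtain ⟨e', g', hsum', he', hg'⟩ : ∃ e' g' : ℕ, e' + g' + t + 2 = 2 ^ K ∧ e' < i ∧ g' ≤ g :=
        ⟨min (i - 1) (2 ^ K - t - 2), 2 ^ K - t - 2 - min (i - 1) (2 ^ K - t - 2),
          by omega, by omega, by omega⟩
      have hsub := hTree_mono (t := t) (by omega : e' ≤ e) hg'
      obtain ⟨w, hw, hlt⟩ := ih e' g' hsum' f (hf.mono hsub) fun v hv => hpos v (hsub hv)
      have := hle w (hsub hw) (by rintro rfl; simp at hw; omega)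
      omega

theorem exists_lt_of_ranksOn_hTree :
    ∀ K e g : ℕ, e + g + t + 2 = 2 ^ K → ∀ f : ℤ ⊕ ℤ → ℕ, RanksOn hGraph (hTree t e g) f →
      (∀ v ∈ hTree t e g, 1 ≤ f v) → ∃ v ∈ hTree t e g, K < f v := by
  intro K
  induction K with
  | zero => intro e g hsum; simp at hsum
  | succ K ih =>
    intro e g hsum f hf hpos
    by_contra! hle
    have hsumZ : (e : ℤ) + g + t + 2 = 2 ^ (K + 1) := by exact_mod_cast hsum
    have hS := hTree_finite (t := t) (e := e) (g := g)
    by_cases hbig : 2 ^ K ≤ t + 1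
    · -- the outer path `inl (-t), …, inl 0, inr 0, …, inr t`
      have := hf.sub_lt_two_pow_of_isLine isLine_bend_inl_inr (a := -t) (b := t + 1)
        fun n hn => by
          have hn' : bend .inl .inr n ∈ hTree t e g := by
            unfold bend; split_ifs <;> simp at hn ⊢ <;> omega
          exact ⟨hn', hpos _ hn', hle _ hn'⟩
      have : ((2 : ℤ) ^ K) ≤ t + 1 := by exact_mod_cast hbig
      omega
    · obtain ⟨v₀, hv₀, hmax⟩ := Set.exists_max_image _ f hS ⟨.inl 0, by simp⟩
      by_cases hlow : f v₀ ≤ K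
      · have := hf.sub_lt_two_pow_of_isLine isLine_bend_inr_inl (a := -g) (b := e + 1)
          fun n hn => by
            have hn' : bend .inr .inl n ∈ hTree t e g := by
              unfold bend; split_ifs <;> simp at hn ⊢ <;> omega
            exact ⟨hn', hpos _ hn', (hmax _ hn').trans hlow⟩
        have : (t : ℤ) + 1 < 2 ^ K := by exact_mod_cast not_le.mp hbig
        omega
      have htop : ∀ w ∈ hTree t e g, w ≠ v₀ → f w ≤ K := fun w hw hne => by
        have := hf.lt_of_isMaxOn hTree_preconnected hv₀ (isMaxOn_iff.mpr hmax) hw hne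
        have := hle v₀ hv₀
        omega
      have ht : t + 2 ≤ 2 ^ K := by omega
      rcases v₀ with i | j
      · exact false_of_top_label_inl ih hsum ht hf hpos hv₀ htop
      · -- `hFlip` moves the top label onto `inl`, exchanging `e` and `g`
        refine false_of_top_label_inl (e := g) (g := e) (f := f ∘ hFlip) (i := -j) ih (by omega) ht
          (hf.comp mapsTo_hFlip_hTree hFlip_injective.injOn fun u _ v _ => hGraph_adj_hFlip)
          (fun v hv => hpos _ (mapsTo_hFlip_hTree hv)) (by simp at hv₀ ⊢; omega)
          fun w hw hne => htop _ (mapsTo_hFlip_hTree hw) fun h => hne (hFlip_injective ?_)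
        rw [h]
        simp [hFlip]

end core

theorem le_treedepth [Finite V] {G : SimpleGraph V} {n : ℕ}
    (h : ∀ k f, IsRanking G k f → n ≤ k) : n ≤ treedepth G := by
  obtain ⟨N, ⟨σ⟩⟩ := Finite.exists_equiv_fin V
  refine le_csInf ⟨N, fun v => σ v + 1, fun v => ⟨Nat.le_add_left _ _, (σ v).isLt⟩, ?_⟩
    fun k ⟨f, hf⟩ => h k f hf
  exact fun u v _ _ huv hf => absurd (σ.injective (Fin.ext (Nat.succ_injective hf))) huv

/-- Index in `R_{k,t}` (index `n` is `v_{n+1}`) of a vertex of `hGraph`, for `m = 2 ^ (k - 2)`: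
`inl 0` is `v_{t+1}` and `inr 0` is `v_{m+1}`. It maps `hTree t (x - 1 - t) (m - 1 - x)` onto
the indices other than `x`. -/
def hPos (m t : ℕ) : ℤ ⊕ ℤ → ℤ :=
  Sum.elim (fun i => t + i) (fun j => m + j)

section transfer

variable {m t : ℕ} {x : ℕ}

theorem hPos_bounds (hx1 : t < x) (hx2 : x < m) {p : ℤ ⊕ ℤ}
    (hp : p ∈ hTree t (x - 1 - t) (m - 1 - x)) :
    0 ≤ hPos m t p ∧ hPos m t p < m + 1 + t ∧ hPos m t p ≠ x := by
  rcases p with i | j <;> simp [hPos] at hp ⊢ <;> omega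

theorem hPos_injOn (hx1 : t < x) (hx2 : x < m) :
    InjOn (hPos m t) (hTree t (x - 1 - t) (m - 1 - x)) := by
  rintro (i | i) hi (j | j) hj h <;> simp [hPos] at hi hj h ⊢ <;> omega

theorem hPos_adj {p q : ℤ ⊕ ℤ} (h : hGraph.Adj p q) :
    (hPos m t p + 1 = hPos m t q ∨ (hPos m t p = t ∧ hPos m t q = m)) ∨
      (hPos m t q + 1 = hPos m t p ∨ (hPos m t q = t ∧ hPos m t p = m)) := by
  simp only [hGraph, fromRel_adj] at h
  rcases h.2 with (⟨i, rfl, rfl⟩ | ⟨j, rfl, rfl⟩ | ⟨rfl, rfl⟩) |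
      (⟨i, rfl, rfl⟩ | ⟨j, rfl, rfl⟩ | ⟨rfl, rfl⟩) <;> simp [hPos] <;> omega

end transfer

/-- The vertex `v_{z+1}` of `R_{k,t} − x`, or the junk value `d` if there is no such vertex. -/
def vertexAt {n : ℕ} {x : Fin n} (d : {w | w ≠ x}) (z : ℤ) : {w | w ≠ x} :=
  if h : 0 ≤ z ∧ z < n ∧ z ≠ x then ⟨⟨z.toNat, by omega⟩, fun hx => h.2.2 (by simp [← hx]; omega)⟩
  else d

theorem vertexAt_val {n : ℕ} {x : Fin n} (d : {w | w ≠ x}) {z : ℤ} (h : 0 ≤ z ∧ z < n ∧ z ≠ x) :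
    (((vertexAt d z : Fin n) : ℕ) : ℤ) = z := by
  simp [vertexAt, h]

theorem exists_ranksOn_hTree {k t b : ℕ} {x : Fin (2 ^ (k - 2) + 1 + t)} (hx1 : t < x.val)
    (hx2 : x.val < 2 ^ (k - 2)) {f : {w | w ≠ x} → ℕ}
    (hf : IsRanking ((Rgraph k t).induce {w | w ≠ x}) b f) :
    ∃ F : ℤ ⊕ ℤ → ℕ, RanksOn hGraph (hTree t (x - 1 - t) (2 ^ (k - 2) - 1 - x)) F ∧
      ∀ v, 1 ≤ F v ∧ F v ≤ b := by
  let d : {w | w ≠ x} := ⟨⟨0, by omega⟩, fun h => by simp [← h] at hx1⟩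
  have hval := fun p hp => vertexAt_val d (hPos_bounds hx1 hx2 (p := p) hp)
  refine ⟨f ∘ vertexAt d ∘ hPos (2 ^ (k - 2)) t, hf.ranksOn_univ.comp (mapsTo_univ _ _) ?_ ?_,
    fun v => hf.1 _⟩
  · intro p hp q hq h
    refine hPos_injOn hx1 hx2 hp hq ?_
    simp only [Function.comp_apply] at h
    rw [← hval p hp, ← hval q hq, h]
  · intro p hp q hq hpq
    have h1 := hval p hp
    have h2 := hval q hq
    have := hPos_adj (m := 2 ^ (k - 2)) (t := t) hpq
    simp only [Function.comp_apply] at h1 h2 ⊢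
    rw [induce_adj, Rgraph, fromRel_adj, Ne, Fin.ext_iff]
    omega

theorem treedepth_Rgraph_deleteCycleVertex_ge_general (k t : ℕ) (x : Fin (2 ^ (k - 2) + 1 + t))
    (hx1 : t < x.val) (hx2 : x.val < 2 ^ (k - 2)) :
    k - 1 ≤ treedepth ((Rgraph k t).induce {w | w ≠ x}) := by
  refine le_treedepth fun b f hf => ?_
  by_contra! hb
  obtain ⟨F, hF, hFb⟩ := exists_ranksOn_hTree hx1 hx2 hf
  obtain ⟨v, -, hv⟩ := exists_lt_of_ranksOn_hTree (k - 2) _ _ (by omega) F hF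
    fun v _ => (hFb v).1
  have := (hFb v).2
  omega

/-- For `k ≥ 3`, `1 ≤ t ≤ 2^(k-2) − 2`, and a degree-2 vertex `x` on the cycle of
`R_{k,t}` (i.e. `x = v_j` with `t + 1 < j < 2^(k-2) + 1`, so the index of `x` is
strictly between `t` and `2^(k-2)`), the graph `R_{k,t} − x` has tree-depth at least
`k − 1`. -/
theorem treedepth_Rgraph_deleteCycleVertex_ge (k t : ℕ) (hk : 3 ≤ k)
    (ht1 : 1 ≤ t) (ht : t ≤ 2 ^ (k - 2) - 2) (x : Fin (2 ^ (k - 2) + 1 + t))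
    (hx1 : t < x.val) (hx2 : x.val < 2 ^ (k - 2)) :
    k - 1 ≤ treedepth ((Rgraph k t).induce {w | w ≠ x}) :=
  treedepth_Rgraph_deleteCycleVertex_ge_general k t x hx1 hx2
end
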